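/- arXiv:2506.22386 — 2 statements merged into one kernel-verified Lean document; each statement's English description precedes it below -/
import Mathlib

section
/- Let V be a complex vector space, let v₁, v₂, v₃ ∈ V be linearly independent, write ξᵢ = ι(vᵢ) for their images in the exterior algebra Λ(V), and let c, ℓ ∈ ℂ. Then the triangle cocycle condition (1 + c·(ξ₁ − ξ₃) − ℓ·(ξ₁ ∧ ξ₃)) · (1 + c·(ξ₃ − ξ₂) − ℓ·(ξ₃ ∧ ξ₂)) = 1 + c·(ξ₁ − ξ₂) − ℓ·(ξ₁ ∧ ξ₂) holds in Λ(V) if and only if c² = ℓ. -/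
open ExteriorAlgebra

/-!
Writing `g(x, y) = 1 + c (ξₓ - ξ_y) - ℓ ξₓ ξ_y`, the relations `ξ² = 0` and `ξ ξ' = -ξ' ξ` give
`g(x, z) g(z, y) = g(x, y) + (c² - ℓ) ι(x - y) ι(z - y)`. For linearly independent `v₁, v₂, v₃`
the vectors `v₁ - v₂` and `v₃ - v₂` are linearly independent, so their wedge product is nonzero
and the cocycle condition is equivalent to `c² - ℓ = 0`.
-/

theorem LinearIndependent.pair_sub_of_triple {R M : Type*} [Ring R] [AddCommGroup M] [Module R M]
    {u v w : M} (h : LinearIndependent R ![u, v, w]) : LinearIndependent R ![u - v, w - v] := by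
  refine LinearIndependent.pair_iff.mpr fun s t hst => ?_
  have hcomb : ∑ i, ![s, -(s + t), t] i • ![u, v, w] i = 0 := by
    rw [Fin.sum_univ_three, ← hst]
    simp only [Matrix.cons_val_zero, Matrix.cons_val_one, Matrix.cons_val_two, Matrix.head_cons,
      Matrix.tail_cons, smul_sub, neg_smul, add_smul]
    abel
  have hcoeff := Fintype.linearIndependent_iff.mp h _ hcomb
  exact ⟨hcoeff 0, hcoeff 2⟩

namespace ExteriorAlgebra

theorem ι_mul_ι_ne_zero_of_linearIndependent {K E : Type*} [Field K] [AddCommGroup E]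
    [Module K E] {x y : E} (h : LinearIndependent K ![x, y]) : ι K x * ι K y ≠ 0 := by
  intro h0
  refine (exteriorPower.ιMulti_family_linearIndependent_field 2 h).ne_zero
    (Set.powersetCard.ofFinEmbEquiv (RelEmbedding.refl (· ≤ ·))) (Subtype.ext ?_)
  simpa [exteriorPower.ιMulti_family, ιMulti_apply, List.ofFn_succ] using h0

variable {R M : Type*} [CommRing R] [AddCommGroup M] [Module R M]

theorem ι_mul_ι_swap (x y : M) : ι R y * ι R x = -(ι R x * ι R y) :=
  CliffordAlgebra.ι_mul_ι_comm_of_isOrtho (.all _ _)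

/-- The `ξ`-part of the transition function along an edge of the momentum polytope. -/
def edgeFactor (c ℓ : R) (x y : M) : ExteriorAlgebra R M :=
  1 + c • (ι R x - ι R y) - ℓ • (ι R x * ι R y)

theorem edgeFactor_mul_edgeFactor (c ℓ : R) (x y z : M) :
    edgeFactor c ℓ x z * edgeFactor c ℓ z y =
      edgeFactor c ℓ x y + (c ^ 2 - ℓ) • (ι R (x - y) * ι R (z - y)) := by
  have hswap_left : ∀ (x y : M) (w : ExteriorAlgebra R M),
      ι R y * (ι R x * w) = -(ι R x * (ι R y * w)) := fun x y w => by
    rw [← mul_assoc, ι_mul_ι_swap, neg_mul, mul_assoc]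
  simp only [edgeFactor, map_sub, smul_sub, sub_mul, mul_sub, add_mul, mul_add, smul_mul_assoc,
    mul_smul_comm, smul_smul, one_mul, mul_one, mul_assoc, ι_sq_zero, smul_zero, mul_zero,
    ι_mul_ι_swap y z, hswap_left y z, mul_neg, smul_neg, neg_zero]
  module

end ExteriorAlgebra

/-- The triangle cocycle condition in the exterior algebra holds iff c² = ℓ. -/
theorem triangle_cocycle_iff_sq (V : Type*) [AddCommGroup V] [Module ℂ V]
    (v₁ v₂ v₃ : V) (hli : LinearIndependent ℂ ![v₁, v₂, v₃]) (c ℓ : ℂ) :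
    (1 + c • (ι ℂ v₁ - ι ℂ v₃) - ℓ • (ι ℂ v₁ * ι ℂ v₃)) *
        (1 + c • (ι ℂ v₃ - ι ℂ v₂) - ℓ • (ι ℂ v₃ * ι ℂ v₂)) =
      1 + c • (ι ℂ v₁ - ι ℂ v₂) - ℓ • (ι ℂ v₁ * ι ℂ v₂) ↔ c ^ 2 = ℓ := by
  have hne : ι ℂ (v₁ - v₂) * ι ℂ (v₃ - v₂) ≠ 0 :=
    ι_mul_ι_ne_zero_of_linearIndependent hli.pair_sub_of_triple
  change edgeFactor c ℓ v₁ v₃ * edgeFactor c ℓ v₃ v₂ = edgeFactor c ℓ v₁ v₂ ↔ _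
  rw [edgeFactor_mul_edgeFactor, add_eq_left, smul_eq_zero, or_iff_left hne, sub_eq_zero]
end

section
/- Let V be a complex vector space, let v₁, v₂, v₃, v₄ ∈ V be linearly independent, write ξᵢ = ι(vᵢ) for their images in the exterior algebra Λ(V), let ℓ ∈ ℤ and c ∈ ℂ. Suppose that both of the following cocycle conditions hold in Λ(V): (1 + c·(ξ₁ − ξ₃) − ℓ·(ξ₁ ∧ ξ₃)) · (1 + c·(ξ₃ − ξ₂) − ℓ·(ξ₃ ∧ ξ₂)) = 1 + c·(ξ₁ − ξ₂) − ℓ·(ξ₁ ∧ ξ₂), and (1 + c·(ξ₄ − ξ₂) − ℓ·(ξ₄ ∧ ξ₂)) · (1 + c·(ξ₁ − ξ₄) − ℓ·(ξ₁ ∧ ξ₄)) = 1 + c·(ξ₁ − ξ₂) − ℓ·(ξ₁ ∧ ξ₂). Then ℓ = 0 and c = 0. -/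
/-!
Linear independence lets us send ξ₁, ξ₂ by an algebra map to square-zero anticommuting elements
`x`, `y` with `x * y ≠ 0`, and ξ₃, ξ₄ to `0`. The first cocycle condition becomes
`(1 + c x)(1 - c y) = 1 + c (x - y) - ℓ x y`, i.e. `c² = ℓ`; the second becomes
`(1 - c y)(1 + c x) = 1 + c (x - y) - ℓ x y`, and since `y x = -x y` this says `c² = -ℓ`.
-/

open ExteriorAlgebra

theorem LinearIndependent.exists_linearMap_apply_eq_single {K V I : Type*} [DivisionRing K]
    [AddCommGroup V] [Module K V] {v : I → V} (hv : LinearIndependent K v) :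
    ∃ φ : V →ₗ[K] I →₀ K, ∀ i, φ (v i) = Finsupp.single i 1 := by
  obtain ⟨φ, hφ⟩ := (Finsupp.linearCombination K v).exists_leftInverse_of_injective
    (LinearMap.ker_eq_bot.mpr hv)
  exact ⟨φ, fun i => by simpa using LinearMap.congr_fun hφ (Finsupp.single i 1)⟩

section CommRing

variable {K A : Type*} [CommRing K] [Ring A] [Algebra K A]

theorem smul_add_smul_mul_self_eq_zero {x y : A} (hx : x * x = 0) (hy : y * y = 0)
    (hyx : y * x = -(x * y)) (a b : K) : (a • x + b • y) * (a • x + b • y) = 0 := by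
  simp only [add_mul, mul_add, smul_mul_smul_comm, hx, hy, hyx, smul_zero, smul_neg, mul_comm b a]
  abel

theorem one_add_smul_mul_one_sub_smul (c : K) (x y : A) :
    (1 + c • x) * (1 - c • y) = 1 + c • (x - y) - c ^ 2 • (x * y) := by
  simp only [add_mul, mul_sub, one_mul, mul_one, smul_mul_smul_comm, smul_sub, sq]
  abel

theorem one_sub_smul_mul_one_add_smul (c : K) (x y : A) :
    (1 - c • y) * (1 + c • x) = 1 + c • (x - y) - c ^ 2 • (y * x) := by
  simp only [sub_mul, mul_add, one_mul, mul_one, smul_mul_smul_comm, smul_sub, sq]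
  abel

end CommRing

section Field

variable {K A : Type*} [Field K] [Ring A] [Algebra K A] {x y : A}

theorem ExteriorAlgebra.exists_algHom_ι_eq {V I : Type*} [DecidableEq I] [AddCommGroup V]
    [Module K V] {v : I → V} (hv : LinearIndependent K v) (hx : x * x = 0) (hy : y * y = 0)
    (hyx : y * x = -(x * y)) (i j : I) :
    ∃ F : ExteriorAlgebra K V →ₐ[K] A,
      ∀ k, F (ι K (v k)) = (if k = i then x else 0) + (if k = j then y else 0) := by
  obtain ⟨φ, hφ⟩ := hv.exists_linearMap_apply_eq_single
  let f : V →ₗ[K] A := ((Finsupp.lapply i).smulRight x + (Finsupp.lapply j).smulRight y) ∘ₗ φ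
  have hf : ∀ m, f m * f m = 0 := fun m => smul_add_smul_mul_self_eq_zero hx hy hyx _ _
  refine ⟨lift K ⟨f, hf⟩, fun k => ?_⟩
  rw [lift_ι_apply]
  simp only [f, LinearMap.comp_apply, hφ, LinearMap.add_apply, LinearMap.smulRight_apply,
    Finsupp.lapply_apply, Finsupp.single_apply, ite_smul, one_smul, zero_smul]

theorem eq_zero_of_cocycle_of_anticomm [CharZero K] {ℓ : ℤ} {c : K} (hxy : x * y ≠ 0)
    (hyx : y * x = -(x * y))
    (h₁ : (1 + c • x) * (1 - c • y) = 1 + c • (x - y) - (ℓ : K) • (x * y))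
    (h₂ : (1 - c • y) * (1 + c • x) = 1 + c • (x - y) - (ℓ : K) • (x * y)) :
    ℓ = 0 ∧ c = 0 := by
  rw [one_add_smul_mul_one_sub_smul, sub_right_inj] at h₁
  rw [one_sub_smul_mul_one_add_smul, sub_right_inj, hyx, smul_neg, neg_eq_iff_eq_neg,
    ← neg_smul] at h₂
  have hc₁ : c ^ 2 = ℓ := smul_left_injective K hxy h₁
  have hc₂ : c ^ 2 = -ℓ := smul_left_injective K hxy h₂
  have hℓ : (ℓ : K) = 0 := by linear_combination (hc₂ - hc₁) / 2
  exact ⟨by exact_mod_cast hℓ, (pow_eq_zero_iff two_ne_zero).mp (hc₁.trans hℓ)⟩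

end Field

/-- Left multiplication by `e₁` and by `e₂` on `Λ(R²)`, in the basis `1, e₁, e₂, e₁ ∧ e₂`. -/
def extMulFst (R : Type*) [Ring R] : Matrix (Fin 4) (Fin 4) R :=
  !![0, 0, 0, 0; 1, 0, 0, 0; 0, 0, 0, 0; 0, 0, 1, 0]

def extMulSnd (R : Type*) [Ring R] : Matrix (Fin 4) (Fin 4) R :=
  !![0, 0, 0, 0; 0, 0, 0, 0; 1, 0, 0, 0; 0, -1, 0, 0]

section ExtMul

variable (R : Type*) [Ring R]

theorem extMulFst_mul_self : extMulFst R * extMulFst R = 0 := by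
  ext i j
  fin_cases i <;> fin_cases j <;> simp [extMulFst, Matrix.mul_apply, Fin.sum_univ_four]

theorem extMulSnd_mul_self : extMulSnd R * extMulSnd R = 0 := by
  ext i j
  fin_cases i <;> fin_cases j <;> simp [extMulSnd, Matrix.mul_apply, Fin.sum_univ_four]

theorem extMulSnd_mul_extMulFst : extMulSnd R * extMulFst R = -(extMulFst R * extMulSnd R) := by
  ext i j
  fin_cases i <;> fin_cases j <;>
    simp [extMulFst, extMulSnd, Matrix.mul_apply, Fin.sum_univ_four]

theorem extMulFst_mul_extMulSnd_ne_zero [Nontrivial R] : extMulFst R * extMulSnd R ≠ 0 := by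
  intro h
  simpa [extMulFst, extMulSnd, Matrix.mul_apply, Fin.sum_univ_four] using
    congrFun (congrFun h 3) 0

end ExtMul

/-- Two adjacent triangle cocycle conditions force ℓ = 0 and c = 0. -/
theorem two_triangles_force_trivial (V : Type*) [AddCommGroup V] [Module ℂ V]
    (v₁ v₂ v₃ v₄ : V) (hli : LinearIndependent ℂ ![v₁, v₂, v₃, v₄])
    (ℓ : ℤ) (c : ℂ)
    (h₁ : (1 + c • (ι ℂ v₁ - ι ℂ v₃) - (ℓ : ℂ) • (ι ℂ v₁ * ι ℂ v₃)) *
        (1 + c • (ι ℂ v₃ - ι ℂ v₂) - (ℓ : ℂ) • (ι ℂ v₃ * ι ℂ v₂)) =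
        1 + c • (ι ℂ v₁ - ι ℂ v₂) - (ℓ : ℂ) • (ι ℂ v₁ * ι ℂ v₂))
    (h₂ : (1 + c • (ι ℂ v₄ - ι ℂ v₂) - (ℓ : ℂ) • (ι ℂ v₄ * ι ℂ v₂)) *
        (1 + c • (ι ℂ v₁ - ι ℂ v₄) - (ℓ : ℂ) • (ι ℂ v₁ * ι ℂ v₄)) =
        1 + c • (ι ℂ v₁ - ι ℂ v₂) - (ℓ : ℂ) • (ι ℂ v₁ * ι ℂ v₂)) :
    ℓ = 0 ∧ c = 0 := by
  obtain ⟨F, hF⟩ := exists_algHom_ι_eq hli (extMulFst_mul_self ℂ) (extMulSnd_mul_self ℂ)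
    (extMulSnd_mul_extMulFst ℂ) 0 1
  have hF₁ : F (ι ℂ v₁) = extMulFst ℂ := by simpa using hF 0
  have hF₂ : F (ι ℂ v₂) = extMulSnd ℂ := by simpa using hF 1
  have hF₃ : F (ι ℂ v₃) = 0 := by simpa using hF 2
  have hF₄ : F (ι ℂ v₄) = 0 := by simpa using hF 3
  have e₁ := congrArg F h₁
  have e₂ := congrArg F h₂
  simp only [map_mul, map_add, map_sub, map_one, map_smul, hF₁, hF₂, hF₃, hF₄, mul_zero,
    zero_mul, smul_zero, sub_zero, zero_sub, smul_neg, ← sub_eq_add_neg] at e₁ e₂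
  exact eq_zero_of_cocycle_of_anticomm (extMulFst_mul_extMulSnd_ne_zero ℂ)
    (extMulSnd_mul_extMulFst ℂ) e₁ e₂
end
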